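/- Under the Boltzmann policy setting with argmax set A* ≠ A and gap Δ, the total variation distance between the softmax distribution P̂ and the uniform-over-argmax policy π* satisfies ‖P̂ − π*‖_TV ≤ (|A|²/2) · (e^{2ε/τ} − 1)/(e^{2ε/τ} + 1) + (|A| − 1) e^{−Δ/τ}. -/

import Mathlib

/-!
Compare both distributions with the exact softmax `P*` of `Q*`. Shifting every logit by at most
`ε/τ` changes each softmax weight by a factor in `[e^{-2ε/τ}, e^{2ε/τ}]`, and two numbers with
`p ≤ E q`, `q ≤ E p` satisfy `|p - q| ≤ (p + q)(E - 1)/(E + 1)`; summing gives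
`‖P̂ - P*‖_TV ≤ tanh (ε/τ)`, and `|A|²/2 ≥ 1` since `|A| ≥ 2`. The weights of `P*` on `A*` are
all equal, hence at most `1/|A*|`, so `‖P* - π*‖_TV` is exactly the mass `P*` puts off `A*`, and
each action there carries weight at most `e^{-Δ/τ}`.
-/

open Real Finset

noncomputable def softmax {ι : Type*} [Fintype ι] (f : ι → ℝ) (i : ι) : ℝ :=
  exp (f i) / ∑ j, exp (f j)

lemma abs_sub_le_add_mul_of_le_mul {p q E : ℝ} (hE : 1 ≤ E) (hpq : p ≤ E * q) (hqp : q ≤ E * p) :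
    |p - q| ≤ (p + q) * ((E - 1) / (E + 1)) := by
  rw [abs_sub_le_iff]
  constructor <;> rw [mul_div_assoc', le_div_iff₀ (by linarith)] <;> nlinarith

lemma exp_le_exp_mul_exp_of_abs_sub_le {x y δ : ℝ} (h : |x - y| ≤ δ) : exp x ≤ exp δ * exp y := by
  rw [← exp_add]
  exact exp_le_exp.2 (by linarith [(abs_le.1 h).2])

lemma sum_abs_sub_le_sum_abs_sub_add {ι : Type*} [Fintype ι] (p q r : ι → ℝ) :
    ∑ i, |p i - r i| ≤ ∑ i, |p i - q i| + ∑ i, |q i - r i| :=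
  (sum_le_sum fun i _ => abs_sub_le (p i) (q i) (r i)).trans_eq sum_add_distrib

lemma sum_abs_sub_uniform_eq {ι : Type*} [Fintype ι] [DecidableEq ι] {p : ι → ℝ}
    (hp0 : ∀ i, 0 ≤ p i) (hp1 : ∑ i, p i = 1) {s : Finset ι} (hs : s.Nonempty)
    (hle : ∀ i ∈ s, p i ≤ 1 / (#s : ℝ)) :
    ∑ i, |p i - if i ∈ s then 1 / (#s : ℝ) else 0| = 2 * ∑ i ∈ sᶜ, p i := by
  have hin : ∑ i ∈ s, |p i - if i ∈ s then 1 / (#s : ℝ) else 0| = 1 - ∑ i ∈ s, p i := by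
    rw [sum_congr rfl fun i hi => by
        rw [if_pos hi, abs_sub_comm, abs_of_nonneg (by linarith [hle i hi])],
      sum_sub_distrib, sum_const, nsmul_eq_mul,
      mul_one_div_cancel (by exact_mod_cast hs.card_pos.ne')]
  have hout : ∑ i ∈ sᶜ, |p i - if i ∈ s then 1 / (#s : ℝ) else 0| = ∑ i ∈ sᶜ, p i :=
    sum_congr rfl fun i hi => by rw [if_neg (mem_compl.1 hi), sub_zero, abs_of_nonneg (hp0 i)]
  rw [← sum_add_sum_compl s, hin, hout, ← hp1, ← sum_add_sum_compl s p]
  ring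

namespace softmax

variable {ι : Type*} [Fintype ι]

lemma sum_exp_pos [Nonempty ι] (f : ι → ℝ) : 0 < ∑ j, exp (f j) :=
  sum_pos (fun j _ => exp_pos (f j)) univ_nonempty

lemma nonneg (f : ι → ℝ) (i : ι) : 0 ≤ softmax f i :=
  div_nonneg (exp_pos _).le (sum_nonneg fun j _ => (exp_pos (f j)).le)

lemma sum_eq_one [Nonempty ι] (f : ι → ℝ) : ∑ i, softmax f i = 1 := by
  simp only [softmax, ← sum_div, div_self (sum_exp_pos f).ne']

lemma le_exp_sub (f : ι → ℝ) (i j : ι) : softmax f i ≤ exp (f i - f j) := by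
  rw [exp_sub]
  exact div_le_div_of_nonneg_left (exp_pos _).le (exp_pos _)
    (single_le_sum (fun k _ => (exp_pos (f k)).le) (mem_univ j))

lemma le_one_div_card {f : ι → ℝ} {s : Finset ι} (hs : ∀ i ∈ s, ∀ j, f j ≤ f i) {i : ι}
    (hi : i ∈ s) : softmax f i ≤ 1 / (#s : ℝ) := by
  have : Nonempty ι := ⟨i⟩
  have hconst : ∀ j ∈ s, exp (f j) = exp (f i) := fun j hj =>
    congrArg exp (le_antisymm (hs i hi j) (hs j hj i))
  have hmass : (#s : ℝ) * exp (f i) ≤ ∑ j, exp (f j) := by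
    rw [← nsmul_eq_mul, ← sum_const, ← sum_congr rfl hconst]
    exact sum_le_sum_of_subset_of_nonneg (subset_univ s) fun j _ _ => (exp_pos (f j)).le
  have hcard : (0 : ℝ) < #s := by exact_mod_cast card_pos.2 ⟨i, hi⟩
  rw [softmax, div_le_div_iff₀ (sum_exp_pos f) hcard]
  linarith

lemma le_exp_mul {f g : ι → ℝ} {δ : ℝ} (h : ∀ i, |f i - g i| ≤ δ) (i : ι) :
    softmax f i ≤ exp (2 * δ) * softmax g i := by
  have : Nonempty ι := ⟨i⟩
  have hg : ∑ j, exp (g j) ≤ exp δ * ∑ j, exp (f j) := by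
    rw [mul_sum]
    exact sum_le_sum fun j _ => exp_le_exp_mul_exp_of_abs_sub_le (abs_sub_comm (f j) (g j) ▸ h j)
  rw [softmax, softmax, mul_div_assoc', div_le_div_iff₀ (sum_exp_pos f) (sum_exp_pos g)]
  calc exp (f i) * ∑ j, exp (g j)
      ≤ (exp δ * exp (g i)) * (exp δ * ∑ j, exp (f j)) :=
        mul_le_mul (exp_le_exp_mul_exp_of_abs_sub_le (h i)) hg (sum_exp_pos g).le (by positivity)
    _ = exp (2 * δ) * exp (g i) * ∑ j, exp (f j) := by rw [two_mul, exp_add]; ring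

lemma sum_abs_sub_le [Nonempty ι] {f g : ι → ℝ} {δ : ℝ} (h : ∀ i, |f i - g i| ≤ δ) :
    ∑ i, |softmax f i - softmax g i| ≤ 2 * ((exp (2 * δ) - 1) / (exp (2 * δ) + 1)) := by
  have hδ : 0 ≤ δ := (abs_nonneg _).trans (h (Classical.arbitrary ι))
  have hsymm : ∀ i, |g i - f i| ≤ δ := fun i => abs_sub_comm (g i) (f i) ▸ h i
  calc ∑ i, |softmax f i - softmax g i|
      ≤ ∑ i, (softmax f i + softmax g i) * ((exp (2 * δ) - 1) / (exp (2 * δ) + 1)) :=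
        sum_le_sum fun i _ => abs_sub_le_add_mul_of_le_mul (one_le_exp (by linarith))
          (le_exp_mul h i) (le_exp_mul hsymm i)
    _ = 2 * ((exp (2 * δ) - 1) / (exp (2 * δ) + 1)) := by
        rw [← sum_mul, sum_add_distrib, sum_eq_one, sum_eq_one]; ring

lemma sum_abs_sub_uniform_le [DecidableEq ι] {f : ι → ℝ} {s : Finset ι} {d : ℝ}
    (hs : ∀ i ∈ s, ∀ j, f j ≤ f i) (hne : s.Nonempty)
    (hgap : ∀ i ∈ sᶜ, ∀ j ∈ s, f i ≤ f j - d) :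
    ∑ i, |softmax f i - if i ∈ s then 1 / (#s : ℝ) else 0| ≤ 2 * (#sᶜ * exp (-d)) := by
  obtain ⟨m, hm⟩ := hne
  have : Nonempty ι := ⟨m⟩
  rw [sum_abs_sub_uniform_eq (nonneg f) (sum_eq_one f) ⟨m, hm⟩ fun i hi => le_one_div_card hs hi]
  gcongr
  simpa using sum_le_card_nsmul _ _ _ fun i hi =>
    (le_exp_sub f i m).trans (exp_le_exp.2 (by linarith [hgap i hi m hm]))

end softmax

theorem stmt_10_general {A : Type*} [Fintype A] [Nonempty A] [DecidableEq A]
    (τ ε : ℝ) (hτ : 0 < τ)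
    (Qh Qs : A → ℝ) (hQ : ∀ a, |Qh a - Qs a| ≤ ε)
    (Astar : Finset A)
    (hAstar : ∀ a, a ∈ Astar ↔ ∀ b, Qs b ≤ Qs a)
    (hne : (Astarᶜ).Nonempty)
    (Δ : ℝ)
    (hΔ : Δ = Finset.univ.sup' Finset.univ_nonempty Qs - (Astarᶜ).sup' hne Qs)
    (Ph πs : A → ℝ)
    (hPh : ∀ a, Ph a = Real.exp (Qh a / τ) / ∑ a', Real.exp (Qh a' / τ))
    (hπ : ∀ a, πs a = if a ∈ Astar then 1 / (Astar.card : ℝ) else 0) :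
    (1 / 2) * ∑ a, |Ph a - πs a| ≤
      ((Fintype.card A : ℝ) ^ 2 / 2) *
          ((Real.exp (2 * ε / τ) - 1) / (Real.exp (2 * ε / τ) + 1)) +
        ((Fintype.card A : ℝ) - 1) * Real.exp (-Δ / τ) := by
  obtain rfl : Ph = softmax fun a => Qh a / τ := funext hPh
  obtain rfl : πs = fun a => if a ∈ Astar then 1 / (#Astar : ℝ) else 0 := funext hπ
  obtain ⟨m, -, hm⟩ := univ.exists_mem_eq_sup' univ_nonempty Qs
  have hmA : m ∈ Astar := (hAstar m).2 fun b => hm ▸ le_sup' Qs (mem_univ b)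
  have hclose := softmax.sum_abs_sub_le (f := fun a => Qh a / τ) (g := fun a => Qs a / τ)
    fun a => by
      rw [← sub_div, abs_div, abs_of_pos hτ]
      exact div_le_div_of_nonneg_right (hQ a) hτ.le
  have hfar := softmax.sum_abs_sub_uniform_le (f := fun a => Qs a / τ) (d := Δ / τ)
    (fun a ha b => div_le_div_of_nonneg_right ((hAstar a).1 ha b) hτ.le) ⟨m, hmA⟩
    fun a ha b hb => by
      rw [← sub_div]
      refine div_le_div_of_nonneg_right ?_ hτ.le
      linarith [le_sup' Qs ha, sup'_le univ_nonempty Qs fun c _ => (hAstar b).1 hb c]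
  have htri := sum_abs_sub_le_sum_abs_sub_add (softmax fun a => Qh a / τ)
    (softmax fun a => Qs a / τ) fun a => if a ∈ Astar then 1 / (#Astar : ℝ) else 0
  rw [← mul_div_assoc 2 ε τ] at hclose
  rw [← neg_div] at hfar
  set K := (exp (2 * ε / τ) - 1) / (exp (2 * ε / τ) + 1)
  have hK : 0 ≤ K := by linarith [(sum_nonneg fun _ _ => abs_nonneg _).trans hclose]
  have hcard : (#Astarᶜ : ℝ) + 1 ≤ Fintype.card A := by
    exact_mod_cast card_compl_add_card Astar ▸ Nat.add_le_add_left (card_pos.2 ⟨m, hmA⟩) _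
  have hcard2 : (1 : ℝ) ≤ (Fintype.card A : ℝ) ^ 2 / 2 := by
    nlinarith [(Nat.one_le_cast.2 (card_pos.2 hne) : (1 : ℝ) ≤ #Astarᶜ)]
  calc (1 / 2) * ∑ a, |softmax (fun a => Qh a / τ) a - if a ∈ Astar then 1 / (#Astar : ℝ) else 0|
      ≤ K + #Astarᶜ * exp (-Δ / τ) := by linarith
    _ ≤ (Fintype.card A : ℝ) ^ 2 / 2 * K + ((Fintype.card A : ℝ) - 1) * exp (-Δ / τ) :=
        add_le_add (le_mul_of_one_le_left hK hcard2)
          (mul_le_mul_of_nonneg_right (by linarith) (exp_pos _).le)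

/-- Total variation bound between the softmax distribution `P̂` of an
`ε`-accurate `Q`-estimate and the uniform-over-argmax policy `π*` of `Q*`:
`‖P̂ − π*‖_TV ≤ (|A|²/2)·(e^{2ε/τ} − 1)/(e^{2ε/τ} + 1) + (|A| − 1) e^{−Δ/τ}`. -/
theorem stmt_10 {A : Type*} [Fintype A] [Nonempty A] [DecidableEq A]
    (τ ε : ℝ) (hτ : 0 < τ) (hε : 0 ≤ ε)
    (Qh Qs : A → ℝ) (hQ : ∀ a, |Qh a - Qs a| ≤ ε)
    (Astar : Finset A)
    (hAstar : ∀ a, a ∈ Astar ↔ ∀ b, Qs b ≤ Qs a)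
    (hne : (Astarᶜ).Nonempty)
    (Δ : ℝ)
    (hΔ : Δ = Finset.univ.sup' Finset.univ_nonempty Qs - (Astarᶜ).sup' hne Qs)
    (Ph πs : A → ℝ)
    (hPh : ∀ a, Ph a = Real.exp (Qh a / τ) / ∑ a', Real.exp (Qh a' / τ))
    (hπ : ∀ a, πs a = if a ∈ Astar then 1 / (Astar.card : ℝ) else 0) :
    (1 / 2) * ∑ a, |Ph a - πs a| ≤
      ((Fintype.card A : ℝ) ^ 2 / 2) *
          ((Real.exp (2 * ε / τ) - 1) / (Real.exp (2 * ε / τ) + 1)) +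
        ((Fintype.card A : ℝ) - 1) * Real.exp (-Δ / τ) :=
  stmt_10_general τ ε hτ Qh Qs hQ Astar hAstar hne Δ hΔ Ph πs hPh hπ
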